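/- For every Q ∈ Sp(2) with a = Q₀₀, b = Q₀₁, t = Re(a), and for all ξ₁, ξ₂ ∈ sp(2) written as ξᵢ = [[xᵢ, yᵢ], [−ȳᵢ, zᵢ]], the Hessian of F on left-invariant vector fields is given by the identity: Re( ( Q · ( ½(ξ₁ξ₂ + ξ₂ξ₁) − D(ξ₁, ξ₂) ) )₀₀ ) = −( t·Re( x̄₁·x₂ ) + Re( conj(t·y₁ + b·z₁)·y₂ ) + Re( conj( Im( b̄·y₁ ) )·z₂ ) ), where D(ξ₁, ξ₂) := ½·[[0, y₁z₂ + y₂z₁ − x₁y₂ − x₂y₁], [−conj(y₁z₂ + y₂z₁ − x₁y₂ − x₂y₁), 0]]. -/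

import Mathlib

noncomputable section
open Matrix

/-- The real quaternions. -/
abbrev H : Type := Quaternion ℝ

/-- `Sp(2)`, the quaternionic unitary group `{Q | Q Qᴴ = 1}`. -/
def Sp2 : Set (Matrix (Fin 2) (Fin 2) H) := {Q | Q * Qᴴ = 1}

/-- `D(ξ₁, ξ₂) = ½·[[0, w], [−w̄, 0]]` with `w = y₁z₂ + y₂z₁ − x₁y₂ − x₂y₁`,
where `ξᵢ = [[xᵢ, yᵢ], [−ȳᵢ, zᵢ]]`. -/
def Dop (ξ₁ ξ₂ : Matrix (Fin 2) (Fin 2) H) : Matrix (Fin 2) (Fin 2) H :=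
  (2⁻¹ : ℝ) • !![0, ξ₁ 0 1 * ξ₂ 1 1 + ξ₂ 0 1 * ξ₁ 1 1 - ξ₁ 0 0 * ξ₂ 0 1 - ξ₂ 0 0 * ξ₁ 0 1;
                 -star (ξ₁ 0 1 * ξ₂ 1 1 + ξ₂ 0 1 * ξ₁ 1 1 - ξ₁ 0 0 * ξ₂ 0 1 - ξ₂ 0 0 * ξ₁ 0 1), 0]

/-- The Hessian of `F(Q) = Re Q₀₀` on left-invariant vector
fields: for `Q ∈ Sp(2)` with `b = Q₀₁`, `t = Re Q₀₀`, and `ξ₁, ξ₂ ∈ sp(2)`,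
`H_F(ξ₁,ξ₂) = Re((Q·(½(ξ₁ξ₂+ξ₂ξ₁) − D(ξ₁,ξ₂)))₀₀)
  = −(t·Re(x̄₁x₂) + Re(conj(t y₁ + b z₁)·y₂) + Re(conj(Im(b̄ y₁))·z₂))`. -/
theorem hessian_of_F (Q : Matrix (Fin 2) (Fin 2) H) (hQ : Q ∈ Sp2)
    (x₁ y₁ z₁ x₂ y₂ z₂ : H)
    (hx₁ : x₁.re = 0) (hz₁ : z₁.re = 0)
    (hx₂ : x₂.re = 0) (hz₂ : z₂.re = 0) :
    let ξ₁ : Matrix (Fin 2) (Fin 2) H := !![x₁, y₁; -star y₁, z₁]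
    let ξ₂ : Matrix (Fin 2) (Fin 2) H := !![x₂, y₂; -star y₂, z₂]
    let t : ℝ := (Q 0 0).re
    let b : H := Q 0 1
    ((Q * ((2⁻¹ : ℝ) • (ξ₁ * ξ₂ + ξ₂ * ξ₁) - Dop ξ₁ ξ₂)) 0 0).re =
      -(t * (star x₁ * x₂).re + (star ((t : H) * y₁ + b * z₁) * y₂).re
        + (star ((star b * y₁).im) * z₂).re) := by
  intro ξ₁ ξ₂ t b
  simp only [Dop, Matrix.mul_apply, Fin.sum_univ_two, Matrix.sub_apply, Matrix.add_apply,
    Matrix.smul_apply, Matrix.of_apply, Matrix.cons_val', Matrix.cons_val_zero,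
    Matrix.cons_val_one, Matrix.head_cons, Matrix.head_fin_const, Matrix.empty_val',
    Matrix.cons_val_fin_one, ξ₁, ξ₂, t, b]
  simp only [Quaternion.re_mul, Quaternion.imI_mul, Quaternion.imJ_mul, Quaternion.imK_mul,
    Quaternion.re_add, Quaternion.imI_add, Quaternion.imJ_add, Quaternion.imK_add,
    Quaternion.re_sub, Quaternion.imI_sub, Quaternion.imJ_sub, Quaternion.imK_sub,
    Quaternion.re_neg, Quaternion.imI_neg, Quaternion.imJ_neg, Quaternion.imK_neg,
    Quaternion.re_smul, Quaternion.imI_smul, Quaternion.imJ_smul, Quaternion.imK_smul,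
    Quaternion.re_star, Quaternion.imI_star, Quaternion.imJ_star, Quaternion.imK_star,
    Quaternion.re_im, Quaternion.imI_im, Quaternion.imJ_im, Quaternion.imK_im,
    Quaternion.re_coe, Quaternion.imI_coe, Quaternion.imJ_coe, Quaternion.imK_coe,
    Quaternion.re_zero, Quaternion.imI_zero, Quaternion.imJ_zero, Quaternion.imK_zero]
  obtain ⟨a0,a1,a2,a3⟩ := Q 0 0
  obtain ⟨b0,b1,b2,b3⟩ := Q 0 1
  obtain ⟨_,p1,p2,p3⟩ := x₁
  obtain ⟨_,q1,q2,q3⟩ := x₂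
  obtain ⟨u0,u1,u2,u3⟩ := y₁
  obtain ⟨v0,v1,v2,v3⟩ := y₂
  obtain ⟨_,r1,r2,r3⟩ := z₁
  obtain ⟨_,s1,s2,s3⟩ := z₂
  simp_all [Quaternion.ext_iff, QuaternionAlgebra.ext_iff]
  ring
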